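/- Suppose the Brascamp–Lieb datum (B,c) satisfies BL(B,c) < ∞. Then M := ∑_{j=1}^m c_j B_j^* B_j : ℝ^n → ℝ^n is positive definite, and the m-transformation ψ(B) defined by ψ(B)_j := B_j M^{-1/2} is equivalent to B and satisfies ∑_{j=1}^m c_j ψ(B)_j^* ψ(B)_j = I_n. -/

import Mathlib

/-!
If some `v ≠ 0` lies in every `ker B_j`, test the BL inequality on the indicators of unit
balls: the integrand is `1` on the open set `{x | ∀ j, |B_j x| < 1}`, which is invariant
under translation by `v` and therefore has infinite volume, so `BL(B,c) = ∞`. Hence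
`⋂ ker B_j = 0`, i.e. `xᵀ M x = ∑ c_j |B_j x|² > 0` for `x ≠ 0`. With the symmetric square
root `Q` of `M`, `∑ c_j (B_j Q⁻¹)ᵀ (B_j Q⁻¹) = Q⁻¹ M Q⁻¹ = 1`, and `B_j Q⁻¹ = 1⁻¹ B_j Q⁻¹`
exhibits the equivalence.
-/

open MeasureTheory ENNReal Matrix Filter Topology

noncomputable section

/-- The space of `m`-transformations: tuples of linear maps `ℝ^n → ℝ^{n_j}`,
represented as matrices. -/
abbrev MTrans (m n : ℕ) (nd : Fin m → ℕ) := ∀ j : Fin m, Matrix (Fin (nd j)) (Fin n) ℝ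

/-- A valid input for the Brascamp–Lieb inequality: each `f j` is measurable and
has positive finite integral. -/
def IsInput {m : ℕ} {nd : Fin m → ℕ} (f : ∀ j : Fin m, (Fin (nd j) → ℝ) → ℝ≥0∞) : Prop :=
  ∀ j, Measurable (f j) ∧ 0 < ∫⁻ y, f j y ∧ ∫⁻ y, f j y < ⊤

/-- The Brascamp–Lieb ratio `BL(B,c;f)`. -/
def BLratio {m n : ℕ} {nd : Fin m → ℕ} (B : MTrans m n nd) (c : Fin m → ℝ)
    (f : ∀ j : Fin m, (Fin (nd j) → ℝ) → ℝ≥0∞) : ℝ≥0∞ :=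
  (∫⁻ x : Fin n → ℝ, ∏ j, f j (B j *ᵥ x) ^ c j) / ∏ j, (∫⁻ y, f j y) ^ c j

/-- The Brascamp–Lieb constant `BL(B,c)`. -/
def BLconst {m n : ℕ} {nd : Fin m → ℕ} (B : MTrans m n nd) (c : Fin m → ℝ) : ℝ≥0∞ :=
  ⨆ (f : ∀ j : Fin m, (Fin (nd j) → ℝ) → ℝ≥0∞) (_ : IsInput f), BLratio B c f

/-- Membership in `F(c)`: finite BL constant and projection-normalised. -/
def MemF {m n : ℕ} {nd : Fin m → ℕ} (B : MTrans m n nd) (c : Fin m → ℝ) : Prop :=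
  BLconst B c < ⊤ ∧ ∀ j, B j * (B j)ᵀ = 1

/-- Membership in `G(c)`: the datum `(B,c)` is geometric. -/
def Geometric {m n : ℕ} {nd : Fin m → ℕ} (B : MTrans m n nd) (c : Fin m → ℝ) : Prop :=
  (∀ j, B j * (B j)ᵀ = 1) ∧ ∑ j, c j • ((B j)ᵀ * B j) = 1

/-- Equivalence of `m`-transformations: `B̃_j = T_j⁻¹ B_j T` for invertible `T, T_j`. -/
def EquivTrans {m n : ℕ} {nd : Fin m → ℕ} (B Bt : MTrans m n nd) : Prop :=
  ∃ (T : Matrix (Fin n) (Fin n) ℝ) (Tj : ∀ j, Matrix (Fin (nd j)) (Fin (nd j)) ℝ),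
    IsUnit T ∧ (∀ j, IsUnit (Tj j)) ∧ ∀ j, Bt j = (Tj j)⁻¹ * B j * T

/-- The square root of a positive semidefinite matrix, as `Matrix.PosSemidef.sqrt` was
defined in Mathlib of December 2024 (removed since). -/
def Matrix.PosSemidef.sqrt {n : Type*} {𝕜 : Type*} [Fintype n] [DecidableEq n] [RCLike 𝕜]
    [PartialOrder 𝕜]     {A : Matrix n n 𝕜} (hA : A.PosSemidef) : Matrix n n 𝕜 :=
  hA.1.eigenvectorUnitary.1 * diagonal ((↑) ∘ (√·) ∘ hA.1.eigenvalues) *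
    (star hA.1.eigenvectorUnitary : Matrix n n 𝕜)

open Classical in
/-- The map `φ`: `φ(B)_j = (B_j B_j^*)^{-1/2} B_j` (defined where `B_j B_j^*` is
positive definite, and as `B_j` otherwise). -/
def phiMap {m n : ℕ} {nd : Fin m → ℕ} (B : MTrans m n nd) : MTrans m n nd := fun j =>
  if h : (B j * (B j)ᵀ).PosDef then (h.posSemidef.sqrt)⁻¹ * B j else B j

open Classical in
/-- The map `ψ`: `ψ(B)_j = B_j M^{-1/2}` with `M = ∑ c_j B_j^* B_j` (defined where `M`
is positive definite, and as `B_j` otherwise). -/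
def psiMap {m n : ℕ} {nd : Fin m → ℕ} (c : Fin m → ℝ) (B : MTrans m n nd) : MTrans m n nd :=
  fun j =>
    if h : (∑ i, c i • ((B i)ᵀ * B i)).PosDef then B j * (h.posSemidef.sqrt)⁻¹ else B j

/-- The BL scaling map `Φ = φ ∘ ψ`. -/
def PhiMap {m n : ℕ} {nd : Fin m → ℕ} (c : Fin m → ℝ) (B : MTrans m n nd) : MTrans m n nd :=
  phiMap (psiMap c B)

/-- The operator norm of a matrix, viewed as a linear map between Euclidean spaces. -/
def opNorm {a b : ℕ} (A : Matrix (Fin a) (Fin b) ℝ) : ℝ :=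
  ‖LinearMap.toContinuousLinearMap (Matrix.toEuclideanLin A)‖

namespace Matrix.PosSemidef

variable {ι : Type*} [Fintype ι] [DecidableEq ι] {A : Matrix ι ι ℝ}

theorem sqrt_mul_sqrt (hA : A.PosSemidef) : hA.sqrt * hA.sqrt = A := by
  have hU := Unitary.coe_star_mul_self hA.1.eigenvectorUnitary
  conv_rhs => rw [hA.1.spectral_theorem, Unitary.conjStarAlgAut_apply]
  simp only [Matrix.PosSemidef.sqrt, Matrix.mul_assoc]
  rw [← Matrix.mul_assoc (star _ : Matrix _ _ ℝ) _, hU, Matrix.one_mul,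
    ← Matrix.mul_assoc (diagonal _), diagonal_mul_diagonal]
  congr 3
  funext i
  simp [Real.mul_self_sqrt (hA.eigenvalues_nonneg i)]

theorem transpose_sqrt (hA : A.PosSemidef) : (hA.sqrt)ᵀ = hA.sqrt := by
  simp [Matrix.PosSemidef.sqrt, Matrix.transpose_mul, Matrix.star_eq_conjTranspose,
    Matrix.mul_assoc]

end Matrix.PosSemidef

namespace Matrix.PosDef

variable {ι : Type*} [Fintype ι] [DecidableEq ι] {A : Matrix ι ι ℝ}

theorem isUnit_sqrt (hA : A.PosDef) : IsUnit hA.posSemidef.sqrt := by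
  refine (isUnit_iff_isUnit_det _).mpr <| isUnit_of_mul_isUnit_left (y := hA.posSemidef.sqrt.det) ?_
  rw [← det_mul, hA.posSemidef.sqrt_mul_sqrt]
  exact (isUnit_iff_isUnit_det A).mp hA.isUnit

theorem inv_sqrt_mul_self_mul_inv_sqrt (hA : A.PosDef) :
    (hA.posSemidef.sqrt)⁻¹ * A * (hA.posSemidef.sqrt)⁻¹ = 1 := by
  have hQ := (isUnit_iff_isUnit_det _).mp hA.isUnit_sqrt
  calc _ = (hA.posSemidef.sqrt)⁻¹ * (hA.posSemidef.sqrt * hA.posSemidef.sqrt) *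
        (hA.posSemidef.sqrt)⁻¹ := by rw [hA.posSemidef.sqrt_mul_sqrt]
    _ = 1 := by
      rw [Matrix.mul_assoc, Matrix.mul_assoc, mul_nonsing_inv _ hQ, Matrix.mul_one,
        nonsing_inv_mul _ hQ]

end Matrix.PosDef

section WeightedGram

variable {ι : Type*} [Fintype ι] {κ : ι → Type*} [∀ j, Fintype (κ j)] {n : Type*} [Fintype n]
  (c : ι → ℝ) (B : ∀ j, Matrix (κ j) n ℝ)

theorem dotProduct_sum_smul_transpose_mul_self_mulVec (x : n → ℝ) :
    x ⬝ᵥ (∑ j, c j • ((B j)ᵀ * B j)) *ᵥ x = ∑ j, c j * (B j *ᵥ x) ⬝ᵥ (B j *ᵥ x) := by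
  simp only [sum_mulVec, dotProduct_sum, smul_mulVec, dotProduct_smul, smul_eq_mul,
    ← mulVec_mulVec, dotProduct_mulVec, vecMul_transpose]

theorem posDef_sum_smul_transpose_mul_self (hc : ∀ j, 0 < c j)
    (hker : ∀ x : n → ℝ, x ≠ 0 → ∃ j, B j *ᵥ x ≠ 0) :
    (∑ j, c j • ((B j)ᵀ * B j)).PosDef := by
  have hpsd : (∑ j, c j • ((B j)ᵀ * B j)).PosSemidef := posSemidef_sum _ fun j _ => by
    simpa using (posSemidef_conjTranspose_mul_self (B j)).smul (hc j).le
  refine posDef_iff_dotProduct_mulVec.mpr ⟨hpsd.1, fun x hx => ?_⟩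
  obtain ⟨j, hj⟩ := hker x hx
  rw [star_trivial, dotProduct_sum_smul_transpose_mul_self_mulVec]
  refine Finset.sum_pos' (fun i _ => mul_nonneg (hc i).le ?_)
    ⟨j, Finset.mem_univ _, mul_pos (hc j) ?_⟩
  · simpa using dotProduct_star_self_nonneg (B i *ᵥ x)
  · simpa using dotProduct_star_self_pos_iff.mpr hj

theorem sum_smul_transpose_mul_self_mul (P : Matrix n n ℝ) :
    ∑ j, c j • ((B j * P)ᵀ * (B j * P)) = Pᵀ * (∑ j, c j • ((B j)ᵀ * B j)) * P := by
  simp only [Matrix.mul_sum, Matrix.sum_mul, transpose_mul, mul_smul_comm, smul_mul_assoc,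
    Matrix.mul_assoc]

end WeightedGram

theorem equivTrans_mul_right {m n : ℕ} {nd : Fin m → ℕ} (B : MTrans m n nd)
    {T : Matrix (Fin n) (Fin n) ℝ} (hT : IsUnit T) : EquivTrans B fun j => B j * T :=
  ⟨T, fun _ => 1, hT, fun _ => isUnit_one, fun j => by rw [inv_one, Matrix.one_mul]⟩

section HaarMeasure

open Function Metric

variable {E : Type*} [NormedAddCommGroup E] [NormedSpace ℝ E] [MeasurableSpace E] [BorelSpace E]
  (μ : Measure E) [μ.IsAddHaarMeasure]

theorem IsOpen.measure_eq_top_of_forall_add_mem {S : Set E} (hSo : IsOpen S) (hSne : S.Nonempty)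
    {v : E} (hv : v ≠ 0) (hS : ∀ x ∈ S, x + v ∈ S) : μ S = ⊤ := by
  obtain ⟨x, hx⟩ := hSne
  obtain ⟨r, hr, hball⟩ := isOpen_iff.mp hSo x hx
  set ρ := min r (‖v‖ / 2)
  have hρ : 0 < ρ := lt_min hr (by positivity)
  have hshift : ∀ y ∈ S, ∀ k : ℕ, y + k • v ∈ S := fun y hy k => by
    induction k with
    | zero => simpa
    | succ k ih => simpa [succ_nsmul, ← add_assoc] using hS _ ih
  have hsub : ∀ k : ℕ, ball (x + k • v) ρ ⊆ S := fun k y hy => by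
    have hy' : y - k • v ∈ ball x r := by
      rw [mem_ball, dist_eq_norm, sub_sub, add_comm, ← dist_eq_norm]
      exact hy.trans_le (min_le_left _ _)
    simpa using hshift _ (hball hy') k
  have hdisj : Pairwise (Disjoint on fun k : ℕ => ball (x + k • v) ρ) := fun k l hkl => by
    refine ball_disjoint_ball ?_
    have hkl' : (1 : ℝ) ≤ |(k : ℝ) - l| := by
      exact_mod_cast Int.one_le_abs (sub_ne_zero.mpr (Nat.cast_injective.ne hkl))
    calc ρ + ρ ≤ ‖v‖ := by linarith [min_le_right r (‖v‖ / 2)]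
      _ ≤ |(k : ℝ) - l| * ‖v‖ := le_mul_of_one_le_left (norm_nonneg v) hkl'
      _ = dist (x + k • v) (x + l • v) := by
        rw [dist_add_left, dist_eq_norm, ← Nat.cast_smul_eq_nsmul ℝ, ← Nat.cast_smul_eq_nsmul ℝ,
          ← sub_smul, norm_smul, Real.norm_eq_abs]
  refine eq_top_iff.mpr ?_
  calc ⊤ = ∑' k : ℕ, μ (ball (x + k • v) ρ) := by
        simp only [Measure.addHaar_ball_center μ (x + _)]
        exact (ENNReal.tsum_const_eq_top_of_ne_zero (measure_ball_pos μ 0 hρ).ne').symm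
    _ = μ (⋃ k : ℕ, ball (x + k • v) ρ) := (measure_iUnion hdisj fun _ => measurableSet_ball).symm
    _ ≤ μ S := measure_mono (Set.iUnion_subset hsub)

end HaarMeasure

section BrascampLieb

open Metric

variable {m n : ℕ} {nd : Fin m → ℕ}

theorem isInput_indicator_ball_one :
    IsInput fun j : Fin m =>
      (ball (0 : Fin (nd j) → ℝ) 1).indicator (1 : (Fin (nd j) → ℝ) → ℝ≥0∞) := fun j => by
  refine ⟨measurable_one.indicator measurableSet_ball, ?_, ?_⟩ <;>
    rw [lintegral_indicator_one measurableSet_ball]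
  exacts [measure_ball_pos _ _ one_pos, measure_ball_lt_top]

theorem BLconst_eq_top_of_mulVec_eq_zero (B : MTrans m n nd) (c : Fin m → ℝ) {v : Fin n → ℝ}
    (hv : v ≠ 0) (hBv : ∀ j, B j *ᵥ v = 0) : BLconst B c = ⊤ := by
  set f := fun j : Fin m => (ball (0 : Fin (nd j) → ℝ) 1).indicator (1 : (Fin (nd j) → ℝ) → ℝ≥0∞)
  set S : Set (Fin n → ℝ) := ⋂ j, (B j *ᵥ ·) ⁻¹' ball 0 1
  have hSo : IsOpen S := isOpen_iInter_of_finite fun j =>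
    isOpen_ball.preimage (continuous_const.matrix_mulVec continuous_id)
  have h0 : (0 : Fin n → ℝ) ∈ S := by simp [S]
  have hSv : ∀ x ∈ S, x + v ∈ S := fun x hx => by
    simpa [S, mulVec_add, hBv] using hx
  have hnum : ∫⁻ x, ∏ j, f j (B j *ᵥ x) ^ c j = ⊤ := by
    refine eq_top_iff.mpr ?_
    calc ⊤ = volume S := (hSo.measure_eq_top_of_forall_add_mem volume ⟨0, h0⟩ hv hSv).symm
      _ = ∫⁻ x, S.indicator 1 x := (lintegral_indicator_one hSo.measurableSet).symm
      _ ≤ _ := lintegral_mono <| Set.indicator_le fun x hx => by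
        simp only [S, Set.mem_iInter, Set.mem_preimage] at hx
        simp [f, hx]
  have hden : ∏ j, (∫⁻ y, f j y) ^ c j ≠ ⊤ := ENNReal.prod_ne_top fun j _ => by
    obtain ⟨-, hpos, hfin⟩ := isInput_indicator_ball_one (nd := nd) j
    exact ENNReal.rpow_ne_top_of_ne_zero hpos.ne' hfin.ne
  have hratio : BLratio B c f = ⊤ := by rw [BLratio, hnum, ENNReal.top_div_of_ne_top hden]
  exact top_unique <| hratio ▸ le_iSup₂ (f := fun g (_ : IsInput g) => BLratio B c g) f
    isInput_indicator_ball_one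

end BrascampLieb

theorem psi_normalisation {m n : ℕ} {nd : Fin m → ℕ} (c : Fin m → ℝ)
    (hc : ∀ j, 0 < c j) (B : MTrans m n nd) (hB : BLconst B c < ⊤) :
    (∑ j, c j • ((B j)ᵀ * B j)).PosDef ∧ EquivTrans B (psiMap c B) ∧
      ∑ j, c j • ((psiMap c B j)ᵀ * psiMap c B j) = 1 := by
  have hM : (∑ j, c j • ((B j)ᵀ * B j)).PosDef :=
    posDef_sum_smul_transpose_mul_self c B hc fun v hv => by
      by_contra! hBv
      exact hB.ne (BLconst_eq_top_of_mulVec_eq_zero B c hv hBv)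
  have hpsi : psiMap c B = fun j => B j * (hM.posSemidef.sqrt)⁻¹ := funext fun _ => dif_pos hM
  rw [hpsi, sum_smul_transpose_mul_self_mul, transpose_nonsing_inv,
    hM.posSemidef.transpose_sqrt, hM.inv_sqrt_mul_self_mul_inv_sqrt]
  exact ⟨hM, equivTrans_mul_right B (isUnit_nonsing_inv_iff.mpr hM.isUnit_sqrt), rfl⟩

end
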